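/- arXiv:math-ph/0502012 — 4 statements merged into one kernel-verified Lean document; each statement's English description precedes it below -/
import Mathlib

section
/- Let F be a field, A an n×k matrix over F (with k ≤ n), and for each strictly increasing k-tuple I of row indices let π_I denote the k×k minor of A on rows I (extended to be alternating in its indices). Then for every (k−1)-tuple i₁ < ... < i_{k−1} and every (k+1)-tuple j₁ < ... < j_{k+1} of row indices, Σ_{l=1}^{k+1} (−1)^l π_{i₁,...,i_{k−1},j_l} · π_{j₁,...,ĵ_l,...,j_{k+1}} = 0, where ĵ_l means j_l is omitted. -/
/-- The quadratic Plücker relations satisfied by the maximal minors of an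
`n × k` matrix (`k = m+1 ≤ n`).  `π I` is the `k×k` minor of `A` on the rows
`I`, which is alternating in the indices.  For any strictly increasing
`(k-1)`-tuple `i` and `(k+1)`-tuple `j` of row indices,
`∑ l (-1)^l π(i, j l) π(j with l-th entry omitted) = 0`. -/
theorem plucker_relations {F : Type*} [Field F] {n m : ℕ} (hkn : m + 1 ≤ n)
    (A : Matrix (Fin n) (Fin (m + 1)) F)
    (π : (Fin (m + 1) → Fin n) → F)
    (hπ : ∀ I, π I = (A.submatrix I id).det)
    (i : Fin m → Fin n) (j : Fin (m + 2) → Fin n)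
    (hi : StrictMono i) (hj : StrictMono j) :
    ∑ l : Fin (m + 2),
      (-1 : F) ^ (l : ℕ) * π (Fin.snoc i (j l)) * π (j ∘ l.succAbove) = 0 := by
  classical
  -- the auxiliary (m+2)×(m+2) matrix: column 0 consists of the minors, column p+1 is
  -- column p of A restricted to the rows j
  set E : Matrix (Fin (m + 2)) (Fin (m + 2)) F :=
    Matrix.of (fun l => Fin.cons (π (Fin.snoc i (j l))) (fun p => A (j l) p)) with hE
  -- cofactor coefficients: column 0 of E is this combination of the other columns
  set c : Fin (m + 1) → F := fun p =>
    (-1 : F) ^ (m + (p : ℕ)) * (A.submatrix i (Fin.succAbove p)).det with hc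
  have hcol0 : ∀ l, E l 0 = ∑ p : Fin (m + 1), c p * E l p.succ := by
    intro l
    have h1 : E l 0 = ((A.submatrix (Fin.snoc i (j l)) id)).det := by
      simp [hE, hπ]
    rw [h1, Matrix.det_succ_row _ (Fin.last m)]
    refine Finset.sum_congr rfl fun p _ => ?_
    have h2 : (A.submatrix (Fin.snoc i (j l)) id).submatrix
        (Fin.last m).succAbove p.succAbove = A.submatrix i p.succAbove := by
      ext q r
      simp [Fin.succAbove_last, Matrix.submatrix_apply]
    rw [h2]
    simp [hE, hc, Fin.snoc_last, mul_comm, mul_assoc, mul_left_comm]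
  -- hence det E = 0
  have hdetE : E.det = 0 := by
    have hupdate : E.updateCol 0
        (fun l => ∑ k : Fin (m + 2), (Fin.cons 0 c : Fin (m+2) → F) k • E l k) = E := by
      ext l q
      rcases eq_or_ne q 0 with rfl | hq
      · rw [Matrix.updateCol_self]
        rw [hcol0 l, Fin.sum_univ_succ]
        simp [smul_eq_mul]
      · rw [Matrix.updateCol_ne hq]
    have := Matrix.det_updateCol_sum E 0 (Fin.cons 0 c)
    rw [hupdate] at this
    simpa using this
  -- Laplace expansion of det E along column 0 gives the Plücker sum
  have hexp := Matrix.det_succ_column_zero E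
  rw [hdetE] at hexp
  rw [← hexp.symm]
  refine Finset.sum_congr rfl fun l _ => ?_
  have hsub : E.submatrix l.succAbove Fin.succ = A.submatrix (j ∘ l.succAbove) id := by
    ext q p
    simp [hE, Matrix.submatrix_apply]
  rw [hsub, ← hπ]
  simp [hE]
end

section
/- Let x₁, ..., x_k be pairwise distinct elements of a field F, let σ_i denote the i-th elementary symmetric polynomial in x₁,...,x_k and σ_j^r the j-th elementary symmetric polynomial in the variables with x_r omitted, and set c_{rj} = x_r^k σ_j^r / ∏_{s≠r}(x_r − x_s). Then for each j with 0 ≤ j ≤ k−1, the polynomial identity Σ_{i=j+1}^{k} σ_i X^{i−j−1} = Σ_{r=1}^{k} c_{rj} ∏_{s≠r} (1 + x_s X) holds in F[X]. -/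
/-!
Reversing coefficients in degree `k - 1` (`Polynomial.reflect`) turns the claim into
`G = ∑ r, c r * ∏ s ≠ r, (X + x s)`, where `G = ∑_{i=j+1}^k σ_i X^(k+j-i)` has degree `< k`.
This is Lagrange interpolation of `G` at the distinct nodes `-x r`, once one knows
`G (-x r) = -σʳ_j (-x r)^k` with `σʳ` the elementary symmetric functions omitting `x r`:
by `σ_(i+1) = σʳ_(i+1) + x r σʳ_i` the sum telescopes, and `σʳ_k = 0`.
-/

open Polynomial Finset

namespace Multiset

theorem esymm_cons_succ {R : Type*} [CommSemiring R] (a : R) (s : Multiset R) (n : ℕ) :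
    (a ::ₘ s).esymm (n + 1) = s.esymm (n + 1) + a * s.esymm n := by
  simp only [esymm, powersetCard_cons, map_add, sum_add, map_map, Function.comp_def, prod_cons,
    sum_map_mul_left]

theorem esymm_eq_zero_of_card_lt {R : Type*} [CommSemiring R] {s : Multiset R} {n : ℕ}
    (h : card s < n) : s.esymm n = 0 := by
  simp [esymm, powersetCard_eq_empty n h]

theorem sum_Icc_esymm_cons_mul_neg_pow {R : Type*} [CommRing R] (a : R) (s : Multiset R)
    {n : ℕ} (hn : card s < n) (j : ℕ) :
    ∑ i ∈ Finset.Icc (j + 1) n, (a ::ₘ s).esymm i * (-a) ^ (n + j - i)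
      = -(s.esymm j * (-a) ^ n) := by
  obtain hjn | hnj := le_or_gt j n
  · set f : ℕ → R := fun i => s.esymm i * (-a) ^ (n + j - i)
    calc _ = ∑ i ∈ Finset.Ico j n, (f (i + 1) - f i) := by
          rw [← Ico_add_one_right_eq_Icc, ← sum_Ico_add']
          refine sum_congr rfl fun i hi => ?_
          have hexp : n + j - i = n + j - (i + 1) + 1 := by grind
          simp only [f, esymm_cons_succ, hexp, pow_succ]
          ring
      _ = -(s.esymm j * (-a) ^ n) := by
          rw [sum_Ico_sub _ hjn]
          simp [f, esymm_eq_zero_of_card_lt hn]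
  · rw [Icc_eq_empty (by omega), sum_empty, esymm_eq_zero_of_card_lt (hn.trans hnj), zero_mul,
      neg_zero]

end Multiset

theorem Lagrange.eq_sum_C_mul_prod_X_sub_C {F ι : Type*} [Field F] [Fintype ι] [DecidableEq ι]
    {v : ι → F} (hv : Function.Injective v) {f : F[X]} (hf : f.degree < Fintype.card ι) :
    f = ∑ i, C (f.eval (v i) / ∏ j ∈ univ.erase i, (v i - v j)) *
      ∏ j ∈ univ.erase i, (X - C (v j)) := by
  refine (eq_interpolate (s := univ) hv.injOn (by simpa using hf)).trans
    (sum_congr rfl fun i _ => ?_)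
  simp only [Lagrange.basis, basisDivisor, prod_mul_distrib, ← map_prod, prod_inv_distrib,
    div_eq_mul_inv, C_mul, mul_assoc]

namespace Polynomial

theorem reflect_sum {R ι : Type*} [Semiring R] (N : ℕ) (s : Finset ι) (f : ι → R[X]) :
    reflect N (∑ i ∈ s, f i) = ∑ i ∈ s, reflect N (f i) :=
  map_sum
    ({ toFun := reflect N, map_zero' := reflect_zero, map_add' := (reflect_add · · N) } :
      R[X] →+ R[X]) f s

theorem reflect_prod {R ι : Type*} [CommSemiring R] (s : Finset ι) (f : ι → R[X])
    (d : ι → ℕ) (h : ∀ i ∈ s, (f i).natDegree ≤ d i) :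
    reflect (∑ i ∈ s, d i) (∏ i ∈ s, f i) = ∏ i ∈ s, reflect (d i) (f i) := by
  classical
  induction s using Finset.induction_on with
  | empty => simp
  | insert a s ha ih =>
    have hs : ∀ i ∈ s, (f i).natDegree ≤ d i := fun i hi => h i (mem_insert_of_mem hi)
    rw [prod_insert ha, sum_insert ha, prod_insert ha,
      reflect_mul _ _ (h a (mem_insert_self a s)) ((natDegree_prod_le _ _).trans (sum_le_sum hs)),
      ih hs]

theorem reflect_prod_X_add_C {R ι : Type*} [CommSemiring R] (s : Finset ι) (a : ι → R) :
    reflect #s (∏ i ∈ s, (X + C (a i))) = ∏ i ∈ s, (1 + C (a i) * X) := by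
  simpa using reflect_prod s (fun i => X + C (a i)) 1 fun i _ =>
    natDegree_add_C.trans_le natDegree_X_le

theorem degree_sum_Icc_C_mul_X_pow_lt {R : Type*} [Semiring R] (a : ℕ → R) (j k : ℕ) :
    degree (∑ i ∈ Icc (j + 1) k, C (a i) * X ^ (k + j - i)) < k := by
  refine (degree_sum_le _ _).trans_lt ((Finset.sup_lt_iff (WithBot.bot_lt_coe _)).2 fun i hi => ?_)
  exact (degree_C_mul_X_pow_le _ _).trans_lt (by exact_mod_cast (show k + j - i < k by grind))

theorem reflect_sum_Icc_C_mul_X_pow {R : Type*} [Semiring R] (a : ℕ → R) (j k : ℕ) :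
    reflect (k - 1) (∑ i ∈ Icc (j + 1) k, C (a i) * X ^ (k + j - i))
      = ∑ i ∈ Icc (j + 1) k, C (a i) * X ^ (i - j - 1) := by
  rw [reflect_sum]
  refine sum_congr rfl fun i hi => ?_
  rw [reflect_C_mul_X_pow, revAt_le (by grind)]
  congr 2
  grind

end Polynomial

theorem div_prod_neg_add_eq {F ι : Type*} [Field F] {t : Finset ι} {n : ℕ} (hn : #t + 1 = n)
    (a e : F) (b : ι → F) :
    -(e * (-a) ^ n) / ∏ s ∈ t, (-a + b s) = a ^ n * e / ∏ s ∈ t, (a - b s) := by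
  subst hn
  have hprod : ∏ s ∈ t, (-a + b s) = (-1) ^ #t * ∏ s ∈ t, (a - b s) := by
    rw [← prod_neg]
    exact prod_congr rfl fun s _ => by ring
  rw [hprod, show -(e * (-a) ^ (#t + 1)) = (-1) ^ #t * (a ^ (#t + 1) * e) by ring,
    mul_div_mul_left _ _ (pow_ne_zero _ (neg_ne_zero.2 one_ne_zero))]

theorem partial_fraction_coeffs_general {F : Type*} [Field F] {k : ℕ} (x : Fin k → F)
    (hx : Function.Injective x) (j : ℕ)
    (c : Fin k → F)
    (hc : ∀ r, c r = x r ^ k *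
        (∑ t ∈ (Finset.univ.erase r).powersetCard j, ∏ s ∈ t, x s) /
        ∏ s ∈ Finset.univ.erase r, (x r - x s)) :
    ∑ i ∈ Finset.Icc (j + 1) k,
        C (∑ t ∈ (Finset.univ : Finset (Fin k)).powersetCard i, ∏ s ∈ t, x s) * X ^ (i - j - 1)
      = ∑ r : Fin k, C (c r) * ∏ s ∈ Finset.univ.erase r, (1 + C (x s) * X) := by
  simp only [← Finset.esymm_map_val] at hc ⊢
  set G : F[X] := ∑ i ∈ Icc (j + 1) k, C ((univ.val.map x).esymm i) * X ^ (k + j - i)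
  have hG_eval (r : Fin k) :
      G.eval (-x r) = -(((univ.erase r).val.map x).esymm j * (-x r) ^ k) := by
    have hcons : univ.val.map x = x r ::ₘ (univ.erase r).val.map x := by
      rw [erase_val, ← Multiset.map_cons, Multiset.cons_erase (mem_univ_val r)]
    simp only [G, eval_finsetSum, eval_mul, eval_C, eval_pow, eval_X, hcons]
    exact Multiset.sum_Icc_esymm_cons_mul_neg_pow _ _ (by simp [r.pos]) j
  have hG : G = ∑ r, C (c r) * ∏ s ∈ univ.erase r, (X + C (x s)) := by
    have hG_degree : G.degree < Fintype.card (Fin k) := by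
      rw [Fintype.card_fin]
      exact degree_sum_Icc_C_mul_X_pow_lt _ j k
    refine (Lagrange.eq_sum_C_mul_prod_X_sub_C (neg_injective.comp hx) hG_degree).trans
      (sum_congr rfl fun r _ => ?_)
    have hcard : #(univ.erase r) + 1 = k := by
      rw [card_erase_add_one (mem_univ r), card_univ, Fintype.card_fin]
    simp only [Function.comp_apply, map_neg, sub_neg_eq_add, hG_eval, hc,
      div_prod_neg_add_eq hcard]
  calc _ = reflect (k - 1) G := (reflect_sum_Icc_C_mul_X_pow _ j k).symm
    _ = _ := by
      rw [hG, reflect_sum]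
      refine sum_congr rfl fun r _ => ?_
      rw [reflect_C_mul, show k - 1 = #(univ.erase r) by simp, reflect_prod_X_add_C]

/-- Partial fraction decomposition identity: for pairwise distinct
`x₁,…,x_k` in a field, with `σ_i` the elementary symmetric polynomials,
`σ_j^r` those omitting `x_r`, and `c_{rj} = x_r^k σ_j^r / ∏_{s≠r}(x_r − x_s)`,
one has `∑_{i=j+1}^k σ_i X^{i−j−1} = ∑_r c_{rj} ∏_{s≠r}(1 + x_s X)` in `F[X]`. -/
theorem partial_fraction_coeffs {F : Type*} [Field F] {k : ℕ} (x : Fin k → F)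
    (hx : Function.Injective x) (j : ℕ) (hj : j < k)
    (c : Fin k → F)
    (hc : ∀ r, c r = x r ^ k *
        (∑ t ∈ (Finset.univ.erase r).powersetCard j, ∏ s ∈ t, x s) /
        ∏ s ∈ Finset.univ.erase r, (x r - x s)) :
    ∑ i ∈ Finset.Icc (j + 1) k,
        C (∑ t ∈ (Finset.univ : Finset (Fin k)).powersetCard i, ∏ s ∈ t, x s) * X ^ (i - j - 1)
      = ∑ r : Fin k, C (c r) * ∏ s ∈ Finset.univ.erase r, (1 + C (x s) * X) :=
  partial_fraction_coeffs_general x hx j c hc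
end

section
/- Let A, B, X be n×n matrices over ℂ (or over ℝ) and let N = fromBlocks A 0 (X·A − B·X) B. Then exp(N) = fromBlocks (exp A) 0 (X·exp(A) − exp(B)·X) (exp B). Consequently, if Ω is the 2n×n matrix with top block I and bottom block I + X, the bottom n×n block of exp(N)·Ω equals X·exp(A) + exp(B). -/
/-!
The unipotent matrix `U = fromBlocks 1 0 X 1` conjugates `fromBlocks A 0 0 B` into
`N = fromBlocks A 0 (X A - B X) B`. Hence `exp N = U (fromBlocks (exp A) 0 0 (exp B)) U⁻¹`, and
the same conjugation computation with `exp A`, `exp B` in place of `A`, `B` gives the claimed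
block form; the bottom block of `exp N * Ω` is then a ring identity.
-/

open Matrix NormedSpace

namespace Matrix

variable {l m n o ι α 𝔸 : Type*}

theorem _root_.HasSum.matrix_fromBlocks [AddCommMonoid α] [TopologicalSpace α]
    {fA : ι → Matrix n l α} {fB : ι → Matrix n m α} {fC : ι → Matrix o l α}
    {fD : ι → Matrix o m α} {a : Matrix n l α} {b : Matrix n m α} {c : Matrix o l α}
    {d : Matrix o m α} (hA : HasSum fA a) (hB : HasSum fB b) (hC : HasSum fC c)
    (hD : HasSum fD d) :
    HasSum (fun i => fromBlocks (fA i) (fB i) (fC i) (fD i)) (fromBlocks a b c d) := by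
  refine Pi.hasSum.2 fun i => Pi.hasSum.2 fun j => ?_
  rcases i with i | i <;> rcases j with j | j
  exacts [Pi.hasSum.1 (Pi.hasSum.1 hA i) j, Pi.hasSum.1 (Pi.hasSum.1 hB i) j,
    Pi.hasSum.1 (Pi.hasSum.1 hC i) j, Pi.hasSum.1 (Pi.hasSum.1 hD i) j]

variable [Fintype m] [DecidableEq m] [Fintype n] [DecidableEq n]

theorem fromBlocks_zero₁₂_zero₂₁_pow [Semiring α] (A : Matrix m m α) (B : Matrix n n α)
    (k : ℕ) :
    fromBlocks A 0 0 B ^ k = fromBlocks (A ^ k) 0 0 (B ^ k) := by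
  induction k with
  | zero => simp
  | succ k ih => simp [pow_succ, ih, fromBlocks_multiply]

section Ring

variable [Ring α]

def fromBlocksUnipotent₂₁ (X : Matrix n m α) : (Matrix (m ⊕ n) (m ⊕ n) α)ˣ where
  val := fromBlocks 1 0 X 1
  inv := fromBlocks 1 0 (-X) 1
  val_inv := by simp [fromBlocks_multiply, ← fromBlocks_one]
  inv_val := by simp [fromBlocks_multiply, ← fromBlocks_one]

theorem fromBlocksUnipotent₂₁_conj (X : Matrix n m α) (A : Matrix m m α) (B : Matrix n n α) :
    (fromBlocksUnipotent₂₁ X : Matrix (m ⊕ n) (m ⊕ n) α) * fromBlocks A 0 0 B *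
        (↑(fromBlocksUnipotent₂₁ X)⁻¹ : Matrix (m ⊕ n) (m ⊕ n) α) =
      fromBlocks A 0 (X * A - B * X) B := by
  simp [fromBlocksUnipotent₂₁, fromBlocks_multiply, sub_eq_add_neg]

end Ring

variable [NormedRing 𝔸] [NormedAlgebra ℚ 𝔸] [CompleteSpace 𝔸]

open scoped Nat in
theorem exp_series_hasSum_exp (A : Matrix m m 𝔸) :
    HasSum (fun k => (k !⁻¹ : ℚ) • A ^ k) (exp A) := by
  open scoped Matrix.Norms.Operator in
  -- The operator-norm instances give the product uniformity only up to unfolding, so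
  -- completeness has to be supplied for that uniformity explicitly.
  have : @CompleteSpace (Matrix m m 𝔸) PseudoMetricSpace.toUniformSpace := Pi.complete _
  exact exp_series_hasSum_exp' A

theorem exp_fromBlocks_zero₁₂_zero₂₁ (A : Matrix m m 𝔸) (B : Matrix n n 𝔸) :
    exp (fromBlocks A 0 0 B) = fromBlocks (exp A) 0 0 (exp B) := by
  refine (exp_series_hasSum_exp _).unique ?_
  simpa only [fromBlocks_zero₁₂_zero₂₁_pow, fromBlocks_smul, smul_zero] using
    (exp_series_hasSum_exp A).matrix_fromBlocks hasSum_zero hasSum_zero (exp_series_hasSum_exp B)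

theorem exp_fromBlocks_zero₁₂_sylvester (A : Matrix m m 𝔸) (B : Matrix n n 𝔸)
    (X : Matrix n m 𝔸) :
    exp (fromBlocks A 0 (X * A - B * X) B) =
      fromBlocks (exp A) 0 (X * exp A - exp B * X) (exp B) := by
  rw [← fromBlocksUnipotent₂₁_conj, exp_units_conj, exp_fromBlocks_zero₁₂_zero₂₁,
    fromBlocksUnipotent₂₁_conj]

end Matrix

/-- For `N = fromBlocks A 0 (XA − BX) B`,
`exp N = fromBlocks (exp A) 0 (X exp A − exp B X) (exp B)`; consequently the
bottom block of `exp N · Ω`, where `Ω` has top block `1` and bottom block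
`1 + X`, equals `X exp A + exp B`. -/
theorem exp_block_soliton {n : ℕ} (A B X : Matrix (Fin n) (Fin n) ℂ)
    (N : Matrix (Fin n ⊕ Fin n) (Fin n ⊕ Fin n) ℂ)
    (hN : N = Matrix.fromBlocks A 0 (X * A - B * X) B)
    (Ω : Matrix (Fin n ⊕ Fin n) (Fin n) ℂ)
    (hΩ : Ω = Matrix.fromRows 1 (1 + X)) :
    exp N = Matrix.fromBlocks (exp A) 0 (X * exp A - exp B * X) (exp B) ∧
    (exp N * Ω).submatrix Sum.inr id = X * exp A + exp B := by
  subst hN hΩ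
  have hexp := exp_fromBlocks_zero₁₂_sylvester A B X
  refine ⟨hexp, ?_⟩
  rw [hexp, fromBlocks_mul_fromRows]
  change (X * exp A - exp B * X) * 1 + exp B * (1 + X) = X * exp A + exp B
  noncomm_ring
end

section
/- Let V = V₋ ⊕ V₊ be a direct sum of F-vector spaces, π₊ the projection onto V₊, and S : V → V linear with π₊(S(V₋)) ⊆ F·u for some u ∈ V₊; write S₊₊ = π₊ ∘ S|_{V₊}. Fix k ≥ 1, scalars λ₁,...,λ_{k−1} ∈ F, and set T = (id + λ₁S)∘(id + λ₂S)∘...∘(id + λ_{k−1}S). Then for any vectors v₁,...,v_k ∈ V₋, the wedge product π₊(T v₁) ∧ π₊(T v₂) ∧ ... ∧ π₊(T v_k) = 0 in ⋀^k V₊. -/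
section Aux

variable {F : Type*} [Field F] {Vm Vp : Type*}
    [AddCommGroup Vm] [Module F Vm] [AddCommGroup Vp] [Module F Vp]

/-- The span of `u, g u, …, g^(n-1) u`. -/
noncomputable def rankOneSpan (g : Module.End F Vp) (u : Vp) (n : ℕ) : Submodule F Vp :=
  Submodule.span F (Set.range fun m : Fin n => (g ^ (m : ℕ)) u)

lemma rankOneSpan_mono (g : Module.End F Vp) (u : Vp) {n : ℕ} :
    rankOneSpan g u n ≤ rankOneSpan g u (n + 1) := by
  apply Submodule.span_mono
  rintro x ⟨m, rfl⟩
  exact ⟨m.castSucc, rfl⟩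

lemma mem_rankOneSpan_succ_of_apply (g : Module.End F Vp) (u : Vp) {n : ℕ} {x : Vp}
    (hx : x ∈ rankOneSpan g u n) : g x ∈ rankOneSpan g u (n + 1) := by
  have : rankOneSpan g u n ≤ Submodule.comap g (rankOneSpan g u (n + 1)) := by
    apply Submodule.span_le.2
    rintro y ⟨m, rfl⟩
    simp only [SetLike.mem_coe, Submodule.mem_comap]
    have : g ((g ^ (m : ℕ)) u) = (g ^ ((m : ℕ) + 1)) u := by
      rw [pow_succ']
      rfl
    rw [this]
    exact Submodule.subset_span ⟨m.succ, rfl⟩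
  exact this hx

lemma u_mem_rankOneSpan_succ (g : Module.End F Vp) (u : Vp) (n : ℕ) :
    u ∈ rankOneSpan g u (n + 1) := by
  have : ((g ^ ((0 : Fin (n+1)) : ℕ)) u) = u := by simp
  exact this ▸ Submodule.subset_span ⟨0, rfl⟩

lemma prod_snd_mem_rankOneSpan (S : Module.End F (Vm × Vp)) (u : Vp)
    (h : ∀ v : Vm, ∃ c : F, (S (v, 0)).2 = c • u)
    (l : List F) (v : Vm) :
    (((l.map fun c => (1 : Module.End F (Vm × Vp)) + c • S).prod) (v, 0)).2
      ∈ rankOneSpan ((LinearMap.snd F Vm Vp) ∘ₗ S ∘ₗ (LinearMap.inr F Vm Vp)) u l.length := by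
  set g : Module.End F Vp := (LinearMap.snd F Vm Vp) ∘ₗ S ∘ₗ (LinearMap.inr F Vm Vp) with hg
  induction l with
  | nil => simp [rankOneSpan]
  | cons c l ih =>
      simp only [List.map_cons, List.prod_cons, List.length_cons]
      set y : Vm × Vp := ((l.map fun c => (1 : Module.End F (Vm × Vp)) + c • S).prod) (v, 0)
        with hy
      have hmul : (((1 : Module.End F (Vm × Vp)) + c • S) *
          (l.map fun c => (1 : Module.End F (Vm × Vp)) + c • S).prod) (v, 0)
          = y + c • S y := by
        simp [Module.End.mul_apply, hy, add_smul]
      rw [hmul]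
      have hSy : (S y).2 ∈ rankOneSpan g u (l.length + 1) := by
        have hdecomp : y = (y.1, 0) + ((0 : Vm), y.2) := by simp
        have : (S y).2 = (S (y.1, 0)).2 + g y.2 := by
          conv_lhs => rw [hdecomp]
          rw [map_add]
          rfl
        rw [this]
        obtain ⟨c', hc'⟩ := h y.1
        refine Submodule.add_mem _ ?_ ?_
        · rw [hc']
          exact Submodule.smul_mem _ _ (u_mem_rankOneSpan_succ g u _)
        · exact mem_rankOneSpan_succ_of_apply g u ih
      have hy2 : y.2 ∈ rankOneSpan g u (l.length + 1) := rankOneSpan_mono g u ih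
      have : (y + c • S y).2 = y.2 + c • (S y).2 := rfl
      rw [this]
      exact Submodule.add_mem _ hy2 (Submodule.smul_mem _ _ hSy)

end Aux

/-- If `S` satisfies the rank-one condition `π₊(S(V₋)) ⊆ F·u` and
`T = ∏_{j=1}^{k-1} (id + λⱼ S)`, then for any `v₁,…,v_k ∈ V₋` the wedge
product `π₊(T v₁) ∧ ⋯ ∧ π₊(T v_k)` vanishes in `⋀ V₊`.  Here `V = V₋ ⊕ V₊`
is realized as `V₋ × V₊` and the wedge is taken in the exterior algebra. -/
theorem rank_one_wedge_vanish {F : Type*} [Field F] {Vm Vp : Type*}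
    [AddCommGroup Vm] [Module F Vm] [AddCommGroup Vp] [Module F Vp]
    (S : Module.End F (Vm × Vp)) (u : Vp)
    (h : ∀ v : Vm, ∃ c : F, (S (v, 0)).2 = c • u)
    (k : ℕ) (hk : 1 ≤ k) (lam : Fin (k - 1) → F)
    (T : Module.End F (Vm × Vp))
    (hT : T = (List.ofFn fun j : Fin (k - 1) => (1 : Module.End F (Vm × Vp)) + lam j • S).prod)
    (v : Fin k → Vm) :
    (List.ofFn fun i : Fin k => ExteriorAlgebra.ι F ((T (v i, 0)).2)).prod
      = (0 : ExteriorAlgebra F Vp) := by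
  classical
  set g : Module.End F Vp := (LinearMap.snd F Vm Vp) ∘ₗ S ∘ₗ (LinearMap.inr F Vm Vp) with hg
  set w : Fin k → Vp := fun i => (T (v i, 0)).2 with hw
  -- each w i is in the span of k-1 vectors
  have hmem : ∀ i, w i ∈ rankOneSpan g u (k - 1) := by
    intro i
    have hofn : (List.ofFn fun j : Fin (k - 1) => (1 : Module.End F (Vm × Vp)) + lam j • S)
        = (List.ofFn lam).map fun c => (1 : Module.End F (Vm × Vp)) + c • S := by
      rw [List.map_ofFn]
      rfl
    have := prod_snd_mem_rankOneSpan S u h (List.ofFn lam) (v i)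
    rw [List.length_ofFn] at this
    rw [hw, hT, hofn]
    exact this
  -- hence the family w is linearly dependent
  have hdep : ¬ LinearIndependent F w := by
    intro hli
    have hsub : Set.range w ≤ Submodule.span F
        (Set.range fun m : Fin (k - 1) => (g ^ (m : ℕ)) u) := by
      rintro x ⟨i, rfl⟩
      exact hmem i
    have := linearIndependent_le_span' w hli _ hsub
    rw [Cardinal.mk_fintype, Fintype.card_fin, Nat.cast_le] at this
    have hcard : Fintype.card (Set.range fun m : Fin (k - 1) => (g ^ (m : ℕ)) u) ≤ k - 1 := by
      simpa using Fintype.card_range_le (fun m : Fin (k - 1) => (g ^ (m : ℕ)) u)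
    omega
  have : ExteriorAlgebra.ιMulti F k w = 0 :=
    AlternatingMap.map_linearDependent (ExteriorAlgebra.ιMulti F k) w hdep
  rw [← ExteriorAlgebra.ιMulti_apply]
  exact this
end
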